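/- arXiv:1909.03478 — 3 statements merged into one kernel-verified Lean document; each statement's English description precedes it below -/
import Mathlib

section
/- Let G be a graph with vertex deletion G' = G[V \ {v}], π an injective ranking, F_π the set of vertices in exactly one of LFMIS(G, π) and LFMIS(G', π), and define for each affected vertex u ≠ v its parent p(u) as the minimum-rank neighbor of u in F_π, and its propagation path P(u) = (w_1, ..., w_k) with w_1 = v, w_k = u, w_i = p(w_{i+1}). Then for all odd i ∈ [k−1], w_i ∈ LFMIS(G, π), and for all even i ∈ [k−1], w_i ∉ LFMIS(G, π). -/
open scoped Classical

variable {V : Type*}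

/-- The lexicographically first maximal independent set under ranking `π`:
`v` is in the LFMIS iff no neighbor of strictly smaller rank is in the LFMIS. -/
noncomputable def lfmis [Fintype V] (G : SimpleGraph V) (π : V → ℝ) : V → Prop :=
  fun v => ∀ u, G.Adj u v → π u < π v → ¬ lfmis G π u
termination_by v => (Finset.univ.filter fun u => π u < π v).card
decreasing_by
  rename_i u _ hlt
  apply Finset.card_lt_card
  constructor
  · intro w hw
    simp only [Finset.mem_filter, Finset.mem_univ, true_and] at hw ⊢
    exact hw.trans hlt
  · intro hsub
    have := hsub (Finset.mem_filter.mpr ⟨Finset.mem_univ u, hlt⟩)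
    simp only [Finset.mem_filter, Finset.mem_univ, true_and] at this
    exact lt_irrefl _ this

/-- The eliminator of `v`: the minimum-rank vertex of `(N(v) ∪ {v}) ∩ LFMIS(G, π)`
(when it exists; otherwise `v` by convention). -/
noncomputable def eliminator [Fintype V] (G : SimpleGraph V) (π : V → ℝ) (v : V) : V :=
  if h : ∃ e, (e = v ∨ G.Adj e v) ∧ lfmis G π e ∧
      ∀ u, (u = v ∨ G.Adj u v) → lfmis G π u → π e ≤ π u
  then h.choose else v

/-- The graph obtained from `G` by deleting the vertex `v` (making it isolated). -/
def delV (G : SimpleGraph V) (v : V) : SimpleGraph V where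
  Adj a b := G.Adj a b ∧ a ≠ v ∧ b ≠ v
  symm := ⟨fun a b h => ⟨h.1.symm, h.2.2, h.2.1⟩⟩
  loopless := ⟨fun a h => G.loopless.irrefl a h.1⟩

/-- `u` is flipped (for the deletion of `v` from `G`): it belongs to exactly one of
`LFMIS(G, π)` and `LFMIS(G \ v, π)`; the deleted vertex `v` itself is flipped iff
it belongs to `LFMIS(G, π)`. -/
noncomputable def flippedDel [Fintype V] (G : SimpleGraph V) (π : V → ℝ) (v u : V) : Prop :=
  if u = v then lfmis G π v else ¬ (lfmis G π u ↔ lfmis (delV G v) π u)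

/-- `u` is affected (for the deletion of `v` from `G`): its eliminator differs
between `G` and `G \ v`; the deleted vertex `v` itself is affected iff its status
changes, i.e. iff `v ∈ LFMIS(G, π)`. -/
noncomputable def affectedDel [Fintype V] (G : SimpleGraph V) (π : V → ℝ) (v u : V) : Prop :=
  if u = v then lfmis G π v else eliminator G π u ≠ eliminator (delV G v) π u

/-- `p` is the parent of `u` (for the deletion of `v` from `G`): `p` is the
minimum-rank flipped neighbor of `u`. -/
noncomputable def isParent [Fintype V] (G : SimpleGraph V) (π : V → ℝ) (v p u : V) : Prop :=
  G.Adj p u ∧ flippedDel G π v p ∧ π p < π u ∧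
    ∀ w, G.Adj w u → flippedDel G π v w → π p ≤ π w

/-- `l` is the propagation path of the affected vertex `u` (for the deletion of
`v` from `G`): it starts at `v`, ends at `u`, and each vertex is the parent of
the next. -/
noncomputable def isPropPath [Fintype V] (G : SimpleGraph V) (π : V → ℝ) (v : V)
    (l : List V) (u : V) : Prop :=
  l ≠ [] ∧ l.head? = some v ∧ l.getLast? = some u ∧ affectedDel G π v u ∧
    ∀ i (h : i + 1 < l.length),
      isParent G π v (l[i]'(Nat.lt_of_succ_lt h)) (l[i + 1]'h)


lemma lfmis_iff [Fintype V] (G : SimpleGraph V) (π : V → ℝ) (w : V) :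
    lfmis G π w ↔ ∀ u, G.Adj u w → π u < π w → ¬ lfmis G π u := by
  rw [lfmis]

lemma parent_step [Fintype V] (G : SimpleGraph V) (π : V → ℝ) (v p w : V)
    (hp : isParent G π v p w) (hw : flippedDel G π v w) (hwv : w ≠ v) :
    (lfmis G π w ↔ ¬ lfmis G π p) := by
  obtain ⟨hadj, hpf, hlt, _⟩ := hp
  constructor
  · intro hI
    exact (lfmis_iff G π w).mp hI p hadj hlt
  · intro hpI
    by_cases hpv : p = v
    · exfalso
      rw [flippedDel, if_pos hpv] at hpf
      exact hpI (hpv ▸ hpf)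
    · rw [flippedDel, if_neg hpv] at hpf
      rw [flippedDel, if_neg hwv] at hw
      have hp' : lfmis (delV G v) π p := by tauto
      have hw' : ¬ lfmis (delV G v) π w := fun h =>
        (lfmis_iff (delV G v) π w).mp h p ⟨hadj, hpv, hwv⟩ hlt hp'
      tauto

theorem propPath_alternates' [Fintype V] (G : SimpleGraph V) (π : V → ℝ)
    (hπ : Function.Injective π) (v u : V) (l : List V)
    (hl : isPropPath G π v l u) :
    ∀ j (hj : j + 1 < l.length),
      (Even j → lfmis G π (l[j]'(Nat.lt_of_succ_lt hj))) ∧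
      (Odd j → ¬ lfmis G π (l[j]'(Nat.lt_of_succ_lt hj))) := by
  obtain ⟨hne, hhead, hlast, haff, hpar⟩ := hl
  have h0 : ∀ (h : 0 < l.length), l[0]'h = v := by
    intro h
    have := List.head?_eq_head hne
    rw [this] at hhead
    simpa [List.getElem_zero] using hhead
  have hmono : ∀ j (hj : j < l.length), 0 < j →
      π (l[0]'(Nat.lt_of_le_of_lt (Nat.zero_le j) hj)) < π (l[j]'hj) := by
    intro j
    induction j with
    | zero => omega
    | succ n ih =>
      intro hj _
      have hlt := (hpar n hj).2.2.1
      rcases Nat.eq_zero_or_pos n with h | h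
      · subst h; exact hlt
      · exact lt_trans (ih (Nat.lt_of_succ_lt hj) h) hlt
  have key : ∀ j (hj : j + 1 < l.length),
      (lfmis G π (l[j]'(Nat.lt_of_succ_lt hj)) ↔ Even j) := by
    intro j
    induction j with
    | zero =>
      intro hj
      have hpf := (hpar 0 hj).2.1
      rw [h0 (Nat.lt_of_succ_lt hj)] at hpf ⊢
      rw [flippedDel, if_pos rfl] at hpf
      simpa using hpf
    | succ n ih =>
      intro hj
      have hpar' := hpar n (Nat.lt_of_succ_lt hj)
      have hflip : flippedDel G π v (l[n+1]'(Nat.lt_of_succ_lt hj)) := (hpar (n+1) hj).2.1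
      have hnev : (l[n+1]'(Nat.lt_of_succ_lt hj)) ≠ v := by
        intro h
        have := hmono (n+1) (Nat.lt_of_succ_lt hj) (Nat.succ_pos n)
        rw [h, h0] at this
        exact lt_irrefl _ this
      rw [parent_step G π v _ _ hpar' hflip hnev, ih (Nat.lt_of_succ_lt hj)]
      simp [Nat.even_add_one, Nat.not_even_iff_odd]
  intro j hj
  constructor
  · intro he; exact (key j hj).mpr he
  · intro ho h; exact (Nat.not_even_iff_odd.mpr ho) ((key j hj).mp h)

/-- Along a propagation path `(w_1, …, w_k)` of an affected vertex, the vertices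
`w_i` for `i ∈ [k-1]` alternate: odd-indexed (1-based) ones are in `LFMIS(G, π)`
and even-indexed ones are not.  (In 0-based indexing `j = i - 1`: even `j` in,
odd `j` out.) -/
theorem propPath_alternates [Fintype V] (G : SimpleGraph V) (π : V → ℝ)
    (hπ : Function.Injective π) (v u : V) (l : List V)
    (hl : isPropPath G π v l u) :
    ∀ j (hj : j + 1 < l.length),
      (Even j → lfmis G π (l[j]'(Nat.lt_of_succ_lt hj))) ∧
      (Odd j → ¬ lfmis G π (l[j]'(Nat.lt_of_succ_lt hj))) := by
  exact propPath_alternates' G π hπ v u l hl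
end

section
/- Let π ∈ Π_L be a permutation of V and let A_π be the set of affected vertices (under deletion of a fixed vertex v). For each u ∈ A_π define φ_{π,u} as the permutation that agrees with π outside the propagation path P_π(u) = (w_1, ..., w_k) and satisfies φ_{π,u}(w_1) = π(w_k) and φ_{π,u}(w_i) = π(w_{i−1}) for 2 ≤ i ≤ k (a cyclic rotation along the path). Then for distinct u, u' ∈ A_π, the permutations φ_{π,u} and φ_{π,u'} are distinct; in particular |{φ_{π,u} : u ∈ A_π}| = |A_π|. -/
open scoped Classical

variable {V : Type*}

/-- The permutation `φ_{π,l}` obtained from `π` by cyclically rotating the ranks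
along the path `l` towards its last vertex: the first vertex of `l` gets the rank
of the last, every later vertex of `l` gets the rank of its predecessor, and all
vertices off `l` keep their rank. -/
noncomputable def rotateAlong [DecidableEq V] (π : V → ℝ) (l : List V) : V → ℝ :=
  fun x =>
    if hx : x ∈ l then
      if l.idxOf x = 0 then π (l.getLast (List.ne_nil_of_mem hx))
      else π (l[l.idxOf x - 1]'(by
        have := List.idxOf_lt_length_iff.mpr hx
        omega))
    else π x

private lemma chain_lt' {π : V → ℝ} {l : List V}
    (h : ∀ i (hi : i + 1 < l.length), π (l[i]'(Nat.lt_of_succ_lt hi)) < π (l[i+1]'hi)) :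
    ∀ j (hj : j < l.length) i (hij : i < j), π (l[i]'(hij.trans hj)) < π (l[j]'hj) := by
  intro j
  induction j with
  | zero => omega
  | succ n ih =>
    intro hj i hij
    have hn : n < l.length := Nat.lt_of_succ_lt hj
    rcases Nat.lt_or_ge i n with h1 | h2
    · exact (ih hn i h1).trans (h n hj)
    · have : i = n := by omega
      subst this; exact h i hj

private lemma last_mem_other [Fintype V] [DecidableEq V] (G : SimpleGraph V)
    (π : V → ℝ) (v u u' : V) (l l' : List V)
    (hl : isPropPath G π v l u) (hl' : isPropPath G π v l' u')
    (heq : rotateAlong π l = rotateAlong π l') : u ∈ l' := by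
  obtain ⟨hne, hhead, hlast, _, hpar⟩ := hl
  obtain ⟨hne', hhead', hlast', _, hpar'⟩ := hl'
  have hv' : l'.head hne' = v := by
    rw [List.head?_eq_head hne'] at hhead'; exact Option.some.inj hhead'
  by_cases huv : u = v
  · subst huv; rw [← hv']; exact List.head_mem hne'
  have hu : l.getLast hne = u := by
    rw [List.getLast?_eq_getLast hne] at hlast; exact Option.some.inj hlast
  have hv : l.head hne = v := by
    rw [List.head?_eq_head hne] at hhead; exact Option.some.inj hhead
  have hlen : 2 ≤ l.length := by
    by_contra hlt
    have h1 : l.length = 1 := by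
      have := List.length_pos_iff.mpr hne; omega
    obtain ⟨a, rfl⟩ := List.length_eq_one_iff.mp h1
    simp only [List.head_cons] at hv
    simp only [List.getLast_singleton] at hu
    exact huv (hv ▸ hu ▸ rfl)
  by_contra hmem
  have key := congrFun heq u
  have hul : u ∈ l := hu ▸ List.getLast_mem hne
  have hlastg : l[l.length - 1]'(by omega) = u := by
    rw [← hu]; exact (l.getLast_eq_getElem hne).symm
  have hi : l.idxOf u < l.length := List.idxOf_lt_length_iff.mpr hul
  have hgi : l[l.idxOf u]'hi = u := List.getElem_idxOf hi
  have hieq : l.idxOf u = l.length - 1 := by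
    by_contra hne2
    have hlt : l.idxOf u < l.length - 1 := by omega
    have := chain_lt' (fun j hj => (hpar j hj).2.2.1) (l.length - 1) (by omega)
      (l.idxOf u) hlt
    rw [hgi, hlastg] at this
    exact lt_irrefl _ this
  have hnz : l.idxOf u ≠ 0 := by omega
  simp only [rotateAlong, dif_pos hul, dif_neg hmem, if_neg hnz] at key
  simp only [hieq] at key
  have hstep := chain_lt' (fun j hj => (hpar j hj).2.2.1) (l.length - 1) (by omega)
    (l.length - 1 - 1) (by omega)
  rw [hlastg] at hstep
  exact (ne_of_lt hstep) key

private lemma lt_of_mem_ne_last [Fintype V] [DecidableEq V] (G : SimpleGraph V)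
    (π : V → ℝ) (v u u' : V) (l' : List V)
    (hl' : isPropPath G π v l' u') (hmem : u ∈ l') (hne : u ≠ u') : π u < π u' := by
  obtain ⟨hne', hhead', hlast', _, hpar'⟩ := hl'
  have hu' : l'.getLast hne' = u' := by
    rw [List.getLast?_eq_getLast hne'] at hlast'; exact Option.some.inj hlast'
  have hlastg : l'[l'.length - 1]'(by
      have := List.length_pos_iff.mpr hne'; omega) = u' := by
    rw [← hu']; exact (l'.getLast_eq_getElem hne').symm
  obtain ⟨i, hi, hgi⟩ := List.mem_iff_getElem.mp hmem
  have hilt : i < l'.length - 1 := by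
    rcases Nat.lt_or_ge i (l'.length - 1) with h1 | h2
    · exact h1
    · exfalso
      have : i = l'.length - 1 := by omega
      subst this
      exact hne (hgi ▸ hlastg ▸ rfl)
  have := chain_lt' (fun j hj => (hpar' j hj).2.2.1) (l'.length - 1)
    (by omega) i hilt
  rw [hgi, hlastg] at this
  exact this

/-- For distinct affected vertices `u ≠ u'` with propagation paths `l` and `l'`,
the rotated permutations `φ_{π,u}` and `φ_{π,u'}` are distinct.  In particular
the map `u ↦ φ_{π,u}` is injective on affected vertices, so it produces `|A_π|`
distinct permutations. -/
theorem rotations_distinct [Fintype V] [DecidableEq V] (G : SimpleGraph V)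
    (π : V → ℝ) (hπ : Function.Injective π) (v u u' : V) (huu' : u ≠ u')
    (l l' : List V) (hl : isPropPath G π v l u) (hl' : isPropPath G π v l' u') :
    rotateAlong π l ≠ rotateAlong π l' := by
  intro heq
  have h1 : u ∈ l' := last_mem_other G π v u u' l l' hl hl' heq
  have h2 : u' ∈ l := last_mem_other G π v u' u l' l hl' hl heq.symm
  have h3 := lt_of_mem_ne_last G π v u u' l' hl' h1 huu'
  have h4 := lt_of_mem_ne_last G π v u' u l hl h2 huu'.symm
  exact lt_irrefl _ (h3.trans h4)
end

section
/- Let π, π' be distinct permutations of V with rotated permutations φ_{π,u} = φ_{π',u'} for vertices u, u', and let w_j be the branching vertex of the propagation paths P_π(u) = (w_1,...,w_k) and P_{π'}(u') = (w'_1,...,w'_{k'}), i.e., the largest index with w_i = w'_i for all i ≤ j. If π'(w_j) ≥ π(w_j), then π(w) = π'(w) for every vertex w not on either path, π(w) = π'(w) for every vertex w with π(w) < π(w_j), and π(w_k) = π'(w'_{k'}). -/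
open scoped Classical

variable {V : Type*}

private lemma rot_not_mem [DecidableEq V] (π : V → ℝ) (l : List V) {x : V} (hx : x ∉ l) :
    rotateAlong π l x = π x := by simp [rotateAlong, hx]

private lemma rot_get [DecidableEq V] (π : V → ℝ) {l : List V} (hnd : l.Nodup) {i : ℕ}
    (hi : i < l.length) (h0 : i ≠ 0) :
    rotateAlong π l (l[i]'hi) = π (l[i-1]'(by omega)) := by
  have hm : (l[i]'hi) ∈ l := List.getElem_mem hi
  simp only [rotateAlong, dif_pos hm, hnd.idxOf_getElem, if_neg h0]

private lemma rot_head [DecidableEq V] (π : V → ℝ) {l : List V} (hnd : l.Nodup)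
    (h : 0 < l.length) :
    rotateAlong π l (l[0]'h) = π (l.getLast (by rintro rfl; simp at h)) := by
  have hm : (l[0]'h) ∈ l := List.getElem_mem h
  simp [rotateAlong, dif_pos hm, hnd.idxOf_getElem]

private lemma path_lt {π : V → ℝ} {l : List V}
    (hpar : ∀ i (h : i + 1 < l.length), π (l[i]'(Nat.lt_of_succ_lt h)) < π (l[i+1]'h)) :
    ∀ i m (him : i < m) (hm : m < l.length), π (l[i]'(him.trans hm)) < π (l[m]'hm) := by
  intro i m him
  induction m, him using Nat.le_induction with
  | base => exact fun hm => hpar i hm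
  | succ n hn ih => exact fun hm => (ih (Nat.lt_of_succ_lt hm)).trans (hpar n hm)

private lemma path_le {π : V → ℝ} {l : List V}
    (hpar : ∀ i (h : i + 1 < l.length), π (l[i]'(Nat.lt_of_succ_lt h)) < π (l[i+1]'h)) :
    ∀ i m (him : i ≤ m) (hm : m < l.length),
      π (l[i]'(lt_of_le_of_lt him hm)) ≤ π (l[m]'hm) := by
  intro i m him hm
  rcases Nat.lt_or_eq_of_le him with h | h
  · exact (path_lt hpar i m h hm).le
  · subst h; exact le_refl _

private lemma path_nodup {π : V → ℝ} {l : List V}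
    (hpar : ∀ i (h : i + 1 < l.length), π (l[i]'(Nat.lt_of_succ_lt h)) < π (l[i+1]'h)) :
    l.Nodup := by
  rw [List.nodup_iff_injective_getElem]
  rintro ⟨i, hi⟩ ⟨m, hm⟩ hg
  simp only at hg
  rcases lt_trichotomy i m with h | h | h
  · exact absurd (hg ▸ path_lt hpar i m h hm) (lt_irrefl _)
  · simp [h]
  · exact absurd (hg ▸ path_lt hpar m i h hi) (lt_irrefl _)

/-- Structural properties of equal rotations.  Let `π ≠ π'` be (injective)
rankings with propagation paths `l` (of `u`, under `π`) and `l'` (of `u'`, under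
`π'`), let `j` be the branching index (largest index up to which the two paths
agree), and suppose `π (w_j) ≤ π' (w_j)` and `φ_{π,u} = φ_{π',u'}`.  Then `π` and
`π'` agree off the two paths, they agree on every vertex of rank `< π (w_j)`, and
the ranks of the two endpoints agree: `π (w_k) = π' (w'_{k'})`. -/
theorem equal_rotations_structure [Fintype V] [DecidableEq V] (G : SimpleGraph V)
    (π π' : V → ℝ) (hπ : Function.Injective π) (hπ' : Function.Injective π')
    (hne : π ≠ π') (v u u' : V) (l l' : List V)
    (hl : isPropPath G π v l u) (hl' : isPropPath G π' v l' u')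
    (j : ℕ) (hjl : j < l.length) (hjl' : j < l'.length)
    (hpref : ∀ i, i ≤ j → l[i]? = l'[i]?)
    (hmax : ∀ (h1 : j + 1 < l.length) (h2 : j + 1 < l'.length),
      l[j + 1]'h1 ≠ l'[j + 1]'h2)
    (hrank : π (l[j]'hjl) ≤ π' (l[j]'hjl))
    (heq : rotateAlong π l = rotateAlong π' l') :
    (∀ w, w ∉ l → w ∉ l' → π w = π' w) ∧
    (∀ w, π w < π (l[j]'hjl) → π w = π' w) ∧
    π (l.getLast hl.1) = π' (l'.getLast hl'.1) := by
  have hlne := hl.1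
  have hlne' := hl'.1
  have hstep : ∀ i (h : i + 1 < l.length),
      π (l[i]'(Nat.lt_of_succ_lt h)) < π (l[i+1]'h) := fun i h => (hl.2.2.2.2 i h).2.2.1
  have hstep' : ∀ i (h : i + 1 < l'.length),
      π' (l'[i]'(Nat.lt_of_succ_lt h)) < π' (l'[i+1]'h) := fun i h => (hl'.2.2.2.2 i h).2.2.1
  have hnd := path_nodup hstep
  have hnd' := path_nodup hstep'
  have hlen : 0 < l.length := List.length_pos_iff.mpr hlne
  have hlen' : 0 < l'.length := List.length_pos_iff.mpr hlne'
  have hpre : ∀ i, i ≤ j → ∀ (h1 : i < l.length) (h2 : i < l'.length),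
      l[i]'h1 = l'[i]'h2 := by
    intro i hij h1 h2
    have h := hpref i hij
    rw [List.getElem?_eq_getElem h1, List.getElem?_eq_getElem h2] at h
    exact Option.some.inj h
  have hv0 : l[0]'hlen = v := by
    have h := hl.2.1
    rw [List.head?_eq_head hlne] at h
    rw [List.getElem_zero]
    exact Option.some.inj h
  have hv0' : l'[0]'hlen' = v := by
    have h := hl'.2.1
    rw [List.head?_eq_head hlne'] at h
    rw [List.getElem_zero]
    exact Option.some.inj h
  -- Part 1: agreement off both paths
  have part1 : ∀ w, w ∉ l → w ∉ l' → π w = π' w := by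
    intro w hw hw'
    have e := congrFun heq w
    rwa [rot_not_mem π l hw, rot_not_mem π' l' hw'] at e
  -- agreement on the strict prefix
  have hprefrank : ∀ i, i < j → ∀ (h1 : i < l.length), π (l[i]'h1) = π' (l[i]'h1) := by
    intro i hij h1
    have h1' : i + 1 < l.length := by omega
    have h2' : i + 1 < l'.length := by omega
    have e : rotateAlong π l (l[i+1]'h1') = rotateAlong π' l' (l'[i+1]'h2') := by
      rw [← hpre (i+1) hij h1' h2']
      exact congrFun heq _
    rw [rot_get π hnd h1' (Nat.succ_ne_zero i), rot_get π' hnd' h2' (Nat.succ_ne_zero i)] at e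
    simp only [Nat.add_sub_cancel] at e
    rw [← hpre i (le_of_lt hij) h1 (by omega)] at e
    exact e
  -- Part 2
  have part2 : ∀ w, π w < π (l[j]'hjl) → π w = π' w := by
    intro w hw
    by_cases hwl : w ∈ l
    · have hi : l.idxOf w < l.length := List.idxOf_lt_length_iff.mpr hwl
      have hwi : l[l.idxOf w]'hi = w := List.getElem_idxOf hi
      have hij : l.idxOf w < j := by
        by_contra hcon
        push_neg at hcon
        have := path_le hstep j (l.idxOf w) hcon hi
        rw [hwi] at this
        exact absurd (lt_of_lt_of_le hw this) (lt_irrefl _)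
      rw [← hwi]
      exact hprefrank (l.idxOf w) hij hi
    · by_cases hwl' : w ∈ l'
      · exfalso
        have hm : l'.idxOf w < l'.length := List.idxOf_lt_length_iff.mpr hwl'
        have hwm : l'[l'.idxOf w]'hm = w := List.getElem_idxOf hm
        have hjm : j < l'.idxOf w := by
          by_contra hcon
          push_neg at hcon
          have := hpre (l'.idxOf w) hcon (by omega) hm
          rw [hwm] at this
          exact hwl (this ▸ List.getElem_mem (show l'.idxOf w < l.length by omega))
        have hm0 : l'.idxOf w ≠ 0 := by omega
        have e := congrFun heq w
        rw [rot_not_mem π l hwl] at e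
        conv at e => rw [← hwm]
        rw [rot_get π' hnd' hm hm0] at e
        have hle : π' (l'[j]'hjl') ≤ π' (l'[l'.idxOf w - 1]'(by omega)) :=
          path_le hstep' j (l'.idxOf w - 1) (by omega) (by omega)
        have hjj : l[j]'hjl = l'[j]'hjl' := hpre j le_rfl hjl hjl'
        rw [← hjj] at hle
        rw [hwm] at e
        rw [← e] at hle
        exact absurd (lt_of_lt_of_le hw (le_trans hrank hle)) (lt_irrefl _)
      · exact part1 w hwl hwl'
  -- Part 3
  have part3 : π (l.getLast hl.1) = π' (l'.getLast hl'.1) := by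
    have e : rotateAlong π l (l[0]'hlen) = rotateAlong π' l' (l'[0]'hlen') := by
      rw [hv0, hv0']
      exact congrFun heq v
    rw [rot_head π hnd hlen, rot_head π' hnd' hlen'] at e
    exact e
  exact ⟨part1, part2, part3⟩
end
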